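/- In type A_{n−1} with gcd(m,n) = 1, the sum over all partitions λ of n with exactly k+1 parts of q^{m(n−ℓ(λ)) − c(λ)}·(1/[m]_q)·[m choose μ(λ)]_q equals q^{(n−1−k)(m−1−k)}·(1/[k+1]_q)·[n−1 choose k]_q·[m−1 choose k]_q, for 0 ≤ k ≤ n−1. -/

import Mathlib

/-!
Write `K_j(n)` for the sum over partitions `λ ⊢ n` with `j` parts of
`q^{m(n-j) - c(λ)} [m choose μ(λ)]_q`, so that the left-hand side is `K_{k+1}(n) / [m]_q`.
Removing the first column (of length `k + 1`) from `λ` leaves a partition `ν ⊢ n - k - 1` with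
`j ≤ k + 1` parts, and every such `ν` arises once. Under this bijection
`c(λ) = (k + 1) j + c(ν)` and `[m choose μ(λ)] = [m - j choose k + 1 - j] [m choose μ(ν)]`, whence
`K_{k+1}(n) = ∑_j q^{(m-k-1) j} [m - j choose k + 1 - j] K_j(n - k - 1)`.
By strong induction this gives `K_{k+1}(n) = q^{(n-k-1)(m-k-1)} [n - 1 choose k] [m choose k + 1]`:
after the trinomial revision
`[m choose j] [m - j choose k + 1 - j] = [m choose k + 1] [k + 1 choose j]`
the inductive step is the `q`-Vandermonde identity. Finally
`[m]_q [m - 1 choose k] = [k + 1]_q [m choose k + 1]`.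
Exponents are kept in `ℤ` since `m - k - 1` may be negative.
-/

open Finset Polynomial

noncomputable def qbinom : ℕ → ℕ → Polynomial ℤ
  | _, 0 => 1
  | 0, _ + 1 => 0
  | n + 1, k + 1 => qbinom n k + Polynomial.X ^ (k + 1) * qbinom n (k + 1)

noncomputable def qmultinom (N : ℕ) : List ℕ → Polynomial ℤ
  | [] => 1
  | a :: l => qbinom N a * qmultinom (N - a) l

noncomputable def toRF (p : Polynomial ℤ) : RatFunc ℚ :=
  algebraMap (Polynomial ℚ) (RatFunc ℚ) (p.map (Int.castRingHom ℚ))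

noncomputable def toRFHom : ℤ[X] →+* RatFunc ℚ :=
  (algebraMap ℚ[X] (RatFunc ℚ)).comp (mapRingHom (Int.castRingHom ℚ))

lemma toRF_zero : toRF 0 = 0 := map_zero toRFHom

lemma toRF_one : toRF 1 = 1 := map_one toRFHom

lemma toRF_mul (p q : ℤ[X]) : toRF (p * q) = toRF p * toRF q := map_mul toRFHom p q

lemma toRF_sum {ι : Type*} (s : Finset ι) (f : ι → ℤ[X]) :
    toRF (∑ i ∈ s, f i) = ∑ i ∈ s, toRF (f i) := map_sum toRFHom f s

lemma toRF_X_pow (k : ℕ) : toRF (X ^ k) = RatFunc.X ^ k := by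
  simp [toRF, RatFunc.algebraMap_X]

lemma toRF_injective : Function.Injective toRF :=
  (IsFractionRing.injective ℚ[X] (RatFunc ℚ)).comp (map_injective _ Int.cast_injective)

lemma toRF_ne_zero {p : ℤ[X]} (hp : p ≠ 0) : toRF p ≠ 0 :=
  fun h => hp (toRF_injective (h.trans toRF_zero.symm))

noncomputable def qint (k : ℕ) : ℤ[X] := ∑ i ∈ range k, X ^ i

noncomputable def qfact : ℕ → ℤ[X]
  | 0 => 1
  | k + 1 => qfact k * qint (k + 1)

lemma qfact_succ (k : ℕ) : qfact (k + 1) = qfact k * qint (k + 1) := rfl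

lemma qint_add (a b : ℕ) : qint (a + b) = qint a + X ^ a * qint b := by
  simp only [qint, sum_range_add, mul_sum, pow_add]

lemma toRF_qint (k : ℕ) : toRF (qint k) = ∑ i ∈ range k, RatFunc.X ^ i := by
  simp only [qint, toRF_sum, toRF_X_pow]

lemma qint_ne_zero {k : ℕ} (hk : 0 < k) : qint k ≠ 0 := by
  intro h
  have := congrArg (eval 1) h
  simp [qint, eval_finsetSum] at this
  omega

lemma qfact_ne_zero (k : ℕ) : qfact k ≠ 0 := by
  induction k with
  | zero => exact one_ne_zero
  | succ k ih => exact mul_ne_zero ih (qint_ne_zero k.succ_pos)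

lemma qbinom_zero_right (n : ℕ) : qbinom n 0 = 1 := by cases n <;> rfl

lemma qbinom_succ_succ (n k : ℕ) :
    qbinom (n + 1) (k + 1) = qbinom n k + X ^ (k + 1) * qbinom n (k + 1) := rfl

lemma qbinom_eq_zero_of_lt {n k : ℕ} (h : n < k) : qbinom n k = 0 := by
  induction n generalizing k with
  | zero => obtain ⟨k, rfl⟩ := Nat.exists_eq_succ_of_ne_zero h.ne'; rfl
  | succ n ih =>
    obtain ⟨k, rfl⟩ := Nat.exists_eq_succ_of_ne_zero (Nat.ne_zero_of_lt h)
    rw [qbinom_succ_succ, ih (by omega), ih (by omega), mul_zero, add_zero]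

lemma qbinom_self (n : ℕ) : qbinom n n = 1 := by
  induction n with
  | zero => rfl
  | succ n ih => rw [qbinom_succ_succ, ih, qbinom_eq_zero_of_lt n.lt_succ_self, mul_zero, add_zero]

lemma qbinom_add_mul_qfact (a b : ℕ) :
    qbinom (a + b) a * (qfact a * qfact b) = qfact (a + b) := by
  induction a generalizing b with
  | zero => simp [qbinom_zero_right, qfact]
  | succ a iha =>
    induction b with
    | zero => simp [qbinom_self, qfact]
    | succ b ihb =>
      have h₁ : qbinom (a + 1 + b) a * (qfact a * qfact (b + 1)) = qfact (a + 1 + b) := by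
        rw [show a + 1 + b = a + (b + 1) by omega]; exact iha (b + 1)
      have hq : qint (a + 1 + b + 1) = qint (a + 1) + X ^ (a + 1) * qint (b + 1) := by
        rw [← qint_add]; ring_nf
      rw [show a + 1 + (b + 1) = a + 1 + b + 1 by omega, qbinom_succ_succ, qfact_succ (a + 1 + b),
        hq, qfact_succ a, qfact_succ b]
      rw [qfact_succ b] at h₁
      rw [qfact_succ a] at ihb
      linear_combination qint (a + 1) * h₁ + X ^ (a + 1) * qint (b + 1) * ihb

lemma qbinom_add_symm (a b : ℕ) : qbinom (a + b) a = qbinom (a + b) b := by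
  refine mul_right_cancel₀ (mul_ne_zero (qfact_ne_zero a) (qfact_ne_zero b)) ?_
  rw [qbinom_add_mul_qfact, add_comm a b, mul_comm (qfact a), qbinom_add_mul_qfact]

/-- Both sides are the `q`-trinomial coefficient `[m; a, b, m - a - b]_q`. -/
lemma qbinom_mul_qbinom (m a b : ℕ) :
    qbinom m a * qbinom (m - a) b = qbinom m (a + b) * qbinom (a + b) a := by
  rcases le_or_gt (a + b) m with h | h
  · obtain ⟨c, rfl⟩ := Nat.exists_eq_add_of_le h
    refine mul_right_cancel₀
      (mul_ne_zero (mul_ne_zero (qfact_ne_zero a) (qfact_ne_zero b)) (qfact_ne_zero c)) ?_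
    have h₁ := qbinom_add_mul_qfact a (b + c)
    have h₂ := qbinom_add_mul_qfact b c
    have h₃ := qbinom_add_mul_qfact (a + b) c
    have h₄ := qbinom_add_mul_qfact a b
    rw [← add_assoc] at h₁
    rw [show a + b + c - a = b + c by omega]
    linear_combination qbinom (a + b + c) a * qfact a * h₂ + h₁ - h₃ -
      qbinom (a + b + c) (a + b) * qfact c * h₄
  · rw [qbinom_eq_zero_of_lt h, zero_mul]
    rcases le_or_gt a m with ha | ha
    · rw [qbinom_eq_zero_of_lt (by omega : m - a < b), mul_zero]
    · rw [qbinom_eq_zero_of_lt ha, zero_mul]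

lemma qbinom_mul_qbinom_comm (m a b : ℕ) :
    qbinom m a * qbinom (m - a) b = qbinom m b * qbinom (m - b) a := by
  rw [qbinom_mul_qbinom, qbinom_mul_qbinom, add_comm b a, qbinom_add_symm]

lemma qbinom_mul_qbinom_sub (m : ℕ) {j c : ℕ} (h : j ≤ c) :
    qbinom m j * qbinom (m - j) (c - j) = qbinom m c * qbinom c (c - j) := by
  obtain ⟨d, rfl⟩ := Nat.exists_eq_add_of_le h
  rw [qbinom_mul_qbinom, Nat.add_sub_cancel_left, qbinom_add_symm]

lemma qint_succ_mul_qbinom (m k : ℕ) :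
    qint (m + 1) * qbinom m k = qint (k + 1) * qbinom (m + 1) (k + 1) := by
  rcases le_or_gt k m with h | h
  · obtain ⟨c, rfl⟩ := Nat.exists_eq_add_of_le h
    refine mul_right_cancel₀ (mul_ne_zero (qfact_ne_zero k) (qfact_ne_zero c)) ?_
    have h₁ := qbinom_add_mul_qfact k c
    have h₂ := qbinom_add_mul_qfact (k + 1) c
    rw [show k + 1 + c = k + c + 1 by omega, qfact_succ (k + c), qfact_succ k] at h₂
    linear_combination qint (k + c + 1) * h₁ - h₂
  · rw [qbinom_eq_zero_of_lt h, qbinom_eq_zero_of_lt (by omega : m + 1 < k + 1), mul_zero,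
      mul_zero]

lemma qbinom_add_eq_sum (m n k : ℕ) :
    qbinom (m + n) k =
      ∑ j ∈ range (k + 1), X ^ ((m - j) * (k - j)) * qbinom m j * qbinom n (k - j) := by
  induction m generalizing k with
  | zero =>
    rw [sum_range_succ', sum_eq_zero fun j _ => by rw [qbinom_eq_zero_of_lt j.succ_pos]; ring]
    simp [qbinom_zero_right]
  | succ m ih =>
    cases k with
    | zero => simp [qbinom_zero_right]
    | succ k =>
      -- Pascal's rule splits each term; the second halves reassemble into
      -- `X ^ (k + 1) * [m + n, k + 1]`.
      have hterm : ∀ i ∈ range (k + 1),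
          X ^ ((m + 1 - (i + 1)) * (k + 1 - (i + 1))) * qbinom (m + 1) (i + 1) *
              qbinom n (k + 1 - (i + 1)) =
            X ^ ((m - i) * (k - i)) * qbinom m i * qbinom n (k - i) +
              X ^ (k + 1) * (X ^ ((m - (i + 1)) * (k + 1 - (i + 1))) * qbinom m (i + 1) *
                qbinom n (k + 1 - (i + 1))) := by
        intro i hi
        have hik : i ≤ k := Nat.lt_succ_iff.mp (mem_range.mp hi)
        simp only [Nat.add_sub_add_right, qbinom_succ_succ]
        rcases le_or_gt (i + 1) m with him | him
        · obtain ⟨d, rfl⟩ := Nat.exists_eq_add_of_le him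
          obtain ⟨e, rfl⟩ := Nat.exists_eq_add_of_le hik
          simp only [Nat.add_sub_cancel_left, show i + 1 + d - i = d + 1 by omega]
          ring
        · rw [qbinom_eq_zero_of_lt him]
          ring
      rw [show m + 1 + n = m + n + 1 by omega, qbinom_succ_succ, ih, ih]
      conv_rhs => rw [sum_range_succ', sum_congr rfl hterm, sum_add_distrib, ← mul_sum]
      conv_lhs => rw [sum_range_succ' _ (k + 1)]
      simp only [qbinom_zero_right, Nat.sub_zero]
      ring

lemma qmultinom_append_of_forall_eq_zero (N : ℕ) (l l' : List ℕ) (h : ∀ a ∈ l', a = 0) :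
    qmultinom N (l ++ l') = qmultinom N l := by
  induction l generalizing N with
  | nil =>
    induction l' with
    | nil => rfl
    | cons a l' ih =>
      rw [List.forall_mem_cons] at h
      simp only [List.nil_append, qmultinom, h.1, qbinom_zero_right, Nat.sub_zero, one_mul]
        at ih ⊢
      exact ih h.2
  | cons a l ih => simp only [List.cons_append, qmultinom, ih]

lemma qbinom_mul_qmultinom (m a : ℕ) (l : List ℕ) :
    qbinom m a * qmultinom (m - a) l = qbinom (m - l.sum) a * qmultinom m l := by
  induction l generalizing m with
  | nil => simp [qmultinom]
  | cons b l ih =>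
    simp only [qmultinom, List.sum_cons, ← Nat.sub_sub, Nat.sub_right_comm m a b]
    rw [← mul_assoc, qbinom_mul_qbinom_comm, mul_assoc, ih, mul_left_comm]

def partitionParts (n : ℕ) : Finset (Multiset ℕ) :=
  (univ : Finset (Nat.Partition n)).map ⟨Nat.Partition.parts, fun _ _ => Nat.Partition.ext⟩

lemma mem_partitionParts {n : ℕ} {s : Multiset ℕ} :
    s ∈ partitionParts n ↔ (∀ x ∈ s, 0 < x) ∧ s.sum = n := by
  simp only [partitionParts, mem_map, mem_univ, true_and]
  exact ⟨by rintro ⟨P, rfl⟩; exact ⟨fun _ => P.parts_pos, P.parts_sum⟩,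
    fun ⟨h₁, h₂⟩ => ⟨⟨s, h₁ _, h₂⟩, rfl⟩⟩

lemma sum_partition_filter {M : Type*} [AddCommMonoid M] (n : ℕ) (p : Multiset ℕ → Prop)
    [DecidablePred p] (f : Multiset ℕ → M) :
    ∑ P ∈ univ.filter (fun P : Nat.Partition n => p P.parts), f P.parts =
      ∑ s ∈ (partitionParts n).filter p, f s := by
  rw [partitionParts, filter_map, sum_map]
  rfl

namespace Multiset

lemma card_le_sum_of_pos {s : Multiset ℕ} (hs : ∀ x ∈ s, 0 < x) : card s ≤ s.sum := by
  simpa using card_nsmul_le_sum hs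

/-- `λ'_j`, the `j`-th part of the conjugate partition. -/
def conjPart (s : Multiset ℕ) (j : ℕ) : ℕ := card (s.filter (j ≤ ·))

/-- The statistic `c(λ) = ∑_j λ'_j λ'_{j+1}`, with `j` running up to a bound `N`; every `N` that
is at least the largest part gives the same value. -/
def cstat (N : ℕ) (s : Multiset ℕ) : ℕ :=
  ∑ j ∈ Finset.Icc 1 N, conjPart s j * conjPart s (j + 1)

def multiplicityList (N : ℕ) (s : Multiset ℕ) : List ℕ :=
  (List.range N).map fun j => s.count (j + 1)

def addFirstColumn (r : ℕ) (ν : Multiset ℕ) : Multiset ℕ :=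
  ν.map (· + 1) + replicate (r - card ν) 1

def removeFirstColumn (s : Multiset ℕ) : Multiset ℕ := (s.filter (1 < ·)).map (· - 1)

variable {r : ℕ} {s ν : Multiset ℕ}

lemma card_addFirstColumn (h : card ν ≤ r) : card (addFirstColumn r ν) = r := by
  simp only [addFirstColumn, card_add, card_map, card_replicate]
  omega

lemma sum_addFirstColumn (h : card ν ≤ r) : (addFirstColumn r ν).sum = ν.sum + r := by
  simp only [addFirstColumn, sum_add, sum_map_add, map_const', sum_replicate, smul_eq_mul,
    mul_one, map_id']
  omega

lemma pos_of_mem_addFirstColumn {x : ℕ} (hx : x ∈ addFirstColumn r ν) : 0 < x := by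
  rcases mem_add.mp hx with hx | hx
  · obtain ⟨a, -, rfl⟩ := mem_map.mp hx
    exact a.succ_pos
  · rw [eq_of_mem_replicate hx]
    exact one_pos

lemma pos_of_mem_removeFirstColumn {x : ℕ} (hx : x ∈ removeFirstColumn s) : 0 < x := by
  obtain ⟨a, ha, rfl⟩ := mem_map.mp hx
  have := (mem_filter.mp ha).2
  omega

lemma removeFirstColumn_addFirstColumn (hν : ∀ x ∈ ν, 0 < x) :
    removeFirstColumn (addFirstColumn r ν) = ν := by
  have h₁ : (ν.map (· + 1)).filter (1 < ·) = ν.map (· + 1) :=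
    filter_eq_self.mpr fun x hx => by
      obtain ⟨a, ha, rfl⟩ := mem_map.mp hx
      have := hν a ha
      omega
  have h₂ : (replicate (r - card ν) 1).filter (1 < ·) = 0 :=
    filter_eq_nil.mpr fun x hx => by rw [eq_of_mem_replicate hx]; omega
  simp [removeFirstColumn, addFirstColumn, filter_add, h₁, h₂, map_map]

lemma addFirstColumn_removeFirstColumn (hs : ∀ x ∈ s, 0 < x) :
    addFirstColumn (card s) (removeFirstColumn s) = s := by
  have h₁ : (removeFirstColumn s).map (· + 1) = s.filter (1 < ·) := by
    rw [removeFirstColumn, map_map]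
    refine (map_congr rfl fun x hx => ?_).trans (map_id _)
    have := (mem_filter.mp hx).2
    simp only [Function.comp_apply, id_eq]
    omega
  have h₂ : replicate (card s - card (removeFirstColumn s)) 1 = s.filter (¬ 1 < ·) := by
    refine (eq_replicate.mpr ⟨?_, fun x hx => ?_⟩).symm
    · have := congrArg card (filter_add_not (1 < ·) s)
      rw [card_add] at this
      simp only [removeFirstColumn, card_map]
      omega
    · have := (mem_filter.mp hx).2
      have := hs x (mem_filter.mp hx).1
      omega
  rw [addFirstColumn, h₁, h₂, filter_add_not]

lemma card_removeFirstColumn_le : card (removeFirstColumn s) ≤ card s :=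
  (card_map _ _).trans_le (card_le_card (filter_le _ s))

lemma sum_removeFirstColumn (hs : ∀ x ∈ s, 0 < x) :
    (removeFirstColumn s).sum + card s = s.sum := by
  conv_rhs => rw [← addFirstColumn_removeFirstColumn hs]
  rw [sum_addFirstColumn card_removeFirstColumn_le]

lemma conjPart_one (hs : ∀ x ∈ s, 0 < x) : conjPart s 1 = card s :=
  congrArg card (filter_eq_self.mpr hs)

lemma conjPart_addFirstColumn_succ {j : ℕ} (hj : 1 ≤ j) :
    conjPart (addFirstColumn r ν) (j + 1) = conjPart ν j := by
  simp only [conjPart, addFirstColumn, filter_add, filter_map, Function.comp_apply,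
    Order.add_one_le_iff, Order.lt_add_one_iff, card_add, card_map, Nat.add_eq_left, card_eq_zero,
    filter_eq_nil, not_lt]
  intro a ha
  rwa [eq_of_mem_replicate ha]

lemma cstat_addFirstColumn (N : ℕ) (hν : ∀ x ∈ ν, 0 < x) (h : card ν ≤ r) :
    cstat (N + 1) (addFirstColumn r ν) = r * card ν + cstat N ν := by
  rw [cstat, ← Finset.add_sum_Ioc_eq_sum_Icc (by omega), ← Finset.Icc_add_one_left_eq_Ioc,
    ← Finset.map_add_right_Icc, Finset.sum_map, conjPart_one fun _ => pos_of_mem_addFirstColumn,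
    card_addFirstColumn h, conjPart_addFirstColumn_succ le_rfl, conjPart_one hν, cstat]
  congr 1
  refine Finset.sum_congr rfl fun j hj => ?_
  have hj : 1 ≤ j := (Finset.mem_Icc.mp hj).1
  simp only [addRightEmbedding_apply]
  rw [conjPart_addFirstColumn_succ hj, conjPart_addFirstColumn_succ (by omega)]

lemma cstat_eq_of_le {M N : ℕ} (hs : ∀ x ∈ s, x ≤ M) (hMN : M ≤ N) :
    cstat N s = cstat M s := by
  refine (Finset.sum_subset (Finset.Icc_subset_Icc_right hMN) fun j hjN hjM => ?_).symm
  have hj : M < j + 1 := by simp only [Finset.mem_Icc, not_and, not_le] at hjN hjM; omega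
  have hzero : conjPart s (j + 1) = 0 :=
    card_eq_zero.mpr (filter_eq_nil.mpr fun x hx => by have := hs x hx; omega)
  rw [hzero, mul_zero]

lemma multiplicityList_addFirstColumn (N : ℕ) (hν : ∀ x ∈ ν, 0 < x) :
    multiplicityList (N + 1) (addFirstColumn r ν) = (r - card ν) :: multiplicityList N ν := by
  have h₁ : count 1 (ν.map (· + 1)) = 0 :=
    count_eq_zero.mpr fun h => by obtain ⟨a, ha, h⟩ := mem_map.mp h; have := hν a ha; omega
  have h₂ (j : ℕ) : count (j + 1 + 1) (ν.map (· + 1)) = count (j + 1) ν :=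
    count_map_eq_count' _ _ (add_left_injective 1) _
  simp [multiplicityList, addFirstColumn, List.range_succ_eq_map, count_replicate, h₁, h₂]

lemma sum_multiplicityList {N : ℕ} (hs : ∀ x ∈ s, 0 < x ∧ x ≤ N) :
    (multiplicityList N s).sum = card s := by
  rw [multiplicityList, ← List.sum_toFinset _ List.nodup_range, List.toFinset_range,
    range_eq_Ico, Finset.sum_Ico_add' (fun a => count a s), zero_add,
    Finset.Ico_add_one_right_eq_Icc,
    sum_count_eq_card fun x hx => Finset.mem_Icc.mpr (hs x hx)]

lemma qmultinom_multiplicityList_of_le (m : ℕ) {M N : ℕ} (hs : ∀ x ∈ s, x ≤ M)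
    (hMN : M ≤ N) :
    qmultinom m (multiplicityList N s) = qmultinom m (multiplicityList M s) := by
  obtain ⟨t, rfl⟩ := Nat.exists_eq_add_of_le hMN
  rw [multiplicityList, List.range_add, List.map_append, List.map_map]
  refine qmultinom_append_of_forall_eq_zero _ _ _ fun a ha => ?_
  obtain ⟨i, -, rfl⟩ := List.mem_map.mp ha
  exact count_eq_zero.mpr fun h => by have := hs _ h; simp at this

end Multiset

open Multiset (addFirstColumn removeFirstColumn)

noncomputable def krewerasTerm (m n : ℕ) (s : Multiset ℕ) : RatFunc ℚ :=
  RatFunc.X ^ (((m * (n - s.card) : ℕ) : ℤ) - (s.cstat n : ℤ)) *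
    toRF (qmultinom m (s.multiplicityList n))

noncomputable def krewerasSum (m n j : ℕ) : RatFunc ℚ :=
  ∑ s ∈ (partitionParts n).filter (fun s => s.card = j), krewerasTerm m n s

lemma krewerasTerm_addFirstColumn (m n k : ℕ) {ν : Multiset ℕ} (hν : ∀ x ∈ ν, 0 < x)
    (hsum : ν.sum = n) (hcard : ν.card ≤ k + 1) :
    krewerasTerm m (n + k + 1) (addFirstColumn (k + 1) ν) =
      RatFunc.X ^ (((m : ℤ) - (k + 1)) * ν.card) *
        toRF (qbinom (m - ν.card) (k + 1 - ν.card)) * krewerasTerm m n ν := by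
  have hle : ∀ x ∈ ν, x ≤ n := fun x hx => hsum ▸ Multiset.le_sum_of_mem hx
  have hjn : ν.card ≤ n := hsum ▸ Multiset.card_le_sum_of_pos hν
  have hc : (addFirstColumn (k + 1) ν).cstat (n + k + 1) = (k + 1) * ν.card + ν.cstat n := by
    rw [Multiset.cstat_addFirstColumn _ hν hcard, Multiset.cstat_eq_of_le hle (by omega)]
  have hq : qmultinom m ((addFirstColumn (k + 1) ν).multiplicityList (n + k + 1)) =
      qbinom (m - ν.card) (k + 1 - ν.card) * qmultinom m (ν.multiplicityList n) := by
    rw [Multiset.multiplicityList_addFirstColumn _ hν, qmultinom, qbinom_mul_qmultinom,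
      Multiset.sum_multiplicityList fun x hx => ⟨hν x hx, (hle x hx).trans (by omega)⟩,
      Multiset.qmultinom_multiplicityList_of_le m hle (by omega)]
  have hexp : ((m * (n + k + 1 - (k + 1)) : ℕ) : ℤ) - ((k + 1) * ν.card + ν.cstat n : ℕ) =
      ((m : ℤ) - (k + 1)) * ν.card +
        (((m * (n - ν.card) : ℕ) : ℤ) - (ν.cstat n : ℤ)) := by
    push_cast [hjn, show n + k + 1 - (k + 1) = n by omega]
    ring
  rw [krewerasTerm, krewerasTerm, Multiset.card_addFirstColumn hcard, hc, hq, toRF_mul, hexp,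
    zpow_add₀ RatFunc.X_ne_zero]
  ring

lemma krewerasSum_add_succ (m n k : ℕ) :
    krewerasSum m (n + k + 1) (k + 1) =
      ∑ j ∈ range (k + 2), RatFunc.X ^ (((m : ℤ) - (k + 1)) * j) *
        toRF (qbinom (m - j) (k + 1 - j)) * krewerasSum m n j := by
  set coeff : ℕ → RatFunc ℚ := fun j =>
    RatFunc.X ^ (((m : ℤ) - (k + 1)) * j) * toRF (qbinom (m - j) (k + 1 - j))
  have hfiber : ∑ j ∈ range (k + 2), coeff j * krewerasSum m n j =
      ∑ ν ∈ (partitionParts n).filter (fun ν => ν.card ∈ range (k + 2)),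
        coeff ν.card * krewerasTerm m n ν := by
    simp only [krewerasSum, mul_sum]
    rw [← sum_fiberwise_eq_sum_filter]
    exact sum_congr rfl fun j _ => sum_congr rfl fun ν hν => by rw [(mem_filter.mp hν).2]
  rw [hfiber, krewerasSum]
  symm
  refine sum_nbij' (addFirstColumn (k + 1)) removeFirstColumn ?_ ?_ ?_ ?_ ?_
  · intro ν hν
    obtain ⟨⟨hpos, hsum⟩, hcard⟩ := by simpa only [mem_filter, mem_partitionParts] using hν
    rw [mem_range, Nat.lt_succ_iff] at hcard
    refine mem_filter.mpr
      ⟨mem_partitionParts.mpr ⟨fun _ => Multiset.pos_of_mem_addFirstColumn, ?_⟩,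
        Multiset.card_addFirstColumn hcard⟩
    rw [Multiset.sum_addFirstColumn hcard, hsum, add_assoc]
  · intro s hs
    obtain ⟨⟨hpos, hsum⟩, hcard⟩ := by simpa only [mem_filter, mem_partitionParts] using hs
    have hsum' := Multiset.sum_removeFirstColumn hpos
    have hcard' := (Multiset.card_removeFirstColumn_le (s := s)).trans_eq hcard
    simp only [mem_filter, mem_partitionParts, mem_range]
    exact ⟨⟨fun _ => Multiset.pos_of_mem_removeFirstColumn, by omega⟩, by omega⟩
  · intro ν hν
    exact Multiset.removeFirstColumn_addFirstColumn (mem_partitionParts.mp (mem_filter.mp hν).1).1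
  · intro s hs
    obtain ⟨⟨hpos, -⟩, hcard⟩ := by simpa only [mem_filter, mem_partitionParts] using hs
    rw [← hcard]
    exact Multiset.addFirstColumn_removeFirstColumn hpos
  · intro ν hν
    obtain ⟨⟨hpos, hsum⟩, hcard⟩ := by simpa only [mem_filter, mem_partitionParts] using hν
    rw [mem_range, Nat.lt_succ_iff] at hcard
    exact (krewerasTerm_addFirstColumn m n k hpos hsum hcard).symm

lemma krewerasSum_of_lt (m : ℕ) {n j : ℕ} (h : n < j) : krewerasSum m n j = 0 := by
  refine sum_eq_zero fun s hs => absurd h (not_lt.mpr ?_)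
  obtain ⟨⟨hpos, hsum⟩, hcard⟩ := by simpa only [mem_filter, mem_partitionParts] using hs
  exact hcard ▸ hsum ▸ Multiset.card_le_sum_of_pos hpos

lemma krewerasSum_succ_zero (m n : ℕ) : krewerasSum m (n + 1) 0 = 0 := by
  refine sum_eq_zero fun s hs => ?_
  obtain ⟨⟨-, hsum⟩, hcard⟩ := by simpa only [mem_filter, mem_partitionParts] using hs
  simp [Multiset.card_eq_zero.mp hcard] at hsum

lemma krewerasSum_zero_zero (m : ℕ) : krewerasSum m 0 0 = 1 := by
  have h : (partitionParts 0).filter (fun s => s.card = 0) = {0} := by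
    ext s
    simp only [mem_filter, mem_partitionParts, mem_singleton, Multiset.card_eq_zero]
    exact ⟨And.right, by rintro rfl; simp⟩
  rw [krewerasSum, h, sum_singleton]
  simp [krewerasTerm, Multiset.cstat, Multiset.multiplicityList, qmultinom, toRF_one]

/-- Recombines a summand of `krewerasSum_add_succ`, evaluated by the inductive hypothesis, into a
summand of the `q`-Vandermonde identity. -/
lemma krewerasSum_summand_eq (m N : ℕ) {k i : ℕ} (hik : i ≤ k) :
    RatFunc.X ^ (((m : ℤ) - (k + 1)) * ((i + 1 : ℕ) : ℤ)) * toRF (qbinom (m - (i + 1)) (k - i)) *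
        (RatFunc.X ^ (((N : ℤ) - i) * ((m : ℤ) - (i + 1))) * toRF (qbinom N i * qbinom m (i + 1))) =
      RatFunc.X ^ ((((N + 1 + k : ℕ) : ℤ) - k) * ((m : ℤ) - (k + 1))) * toRF (qbinom m (k + 1)) *
        toRF (X ^ ((N - i) * (k - i)) * qbinom N i * qbinom (k + 1) (k - i)) := by
  rcases le_or_gt i N with hiN | hiN
  · have hexp :
        ((m : ℤ) - (k + 1)) * ((i + 1 : ℕ) : ℤ) + ((N : ℤ) - i) * ((m : ℤ) - (i + 1)) =
          (((N + 1 + k : ℕ) : ℤ) - k) * ((m : ℤ) - (k + 1)) + (((N - i) * (k - i) : ℕ) : ℤ) := by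
      push_cast [hiN, hik]
      ring
    have hbinom := congrArg toRF (qbinom_mul_qbinom_sub m (by omega : i + 1 ≤ k + 1))
    rw [Nat.add_sub_add_right] at hbinom
    simp only [toRF_mul, toRF_X_pow] at hbinom ⊢
    calc _ = RatFunc.X ^ (((m : ℤ) - (k + 1)) * ((i + 1 : ℕ) : ℤ) +
              ((N : ℤ) - i) * ((m : ℤ) - (i + 1))) * toRF (qbinom N i) *
            (toRF (qbinom m (i + 1)) * toRF (qbinom (m - (i + 1)) (k - i))) := by
          rw [zpow_add₀ RatFunc.X_ne_zero]
          ring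
      _ = _ := by
          rw [hexp, hbinom, zpow_add₀ RatFunc.X_ne_zero, zpow_natCast]
          ring
  · rw [qbinom_eq_zero_of_lt hiN]
    simp [toRF_zero]

theorem krewerasSum_succ_succ (m n k : ℕ) :
    krewerasSum m (n + 1) (k + 1) =
      RatFunc.X ^ (((n : ℤ) - k) * ((m : ℤ) - (k + 1))) *
        toRF (qbinom n k * qbinom m (k + 1)) := by
  induction n using Nat.strong_induction_on generalizing k with
  | _ n ih =>
  rcases lt_or_ge n k with h | h
  · rw [krewerasSum_of_lt m (by omega), qbinom_eq_zero_of_lt h, zero_mul, toRF_zero, mul_zero]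
  obtain ⟨N, rfl⟩ := Nat.exists_eq_add_of_le' h
  rw [krewerasSum_add_succ, sum_range_succ']
  cases N with
  | zero =>
    simp [krewerasSum_of_lt m (Nat.succ_pos _), krewerasSum_zero_zero, qbinom_self]
  | succ N =>
    rw [krewerasSum_succ_zero, mul_zero, add_zero]
    have hterm : ∀ i ∈ range (k + 1),
        RatFunc.X ^ (((m : ℤ) - (k + 1)) * ((i + 1 : ℕ) : ℤ)) *
            toRF (qbinom (m - (i + 1)) (k + 1 - (i + 1))) * krewerasSum m (N + 1) (i + 1) =
          RatFunc.X ^ ((((N + 1 + k : ℕ) : ℤ) - k) * ((m : ℤ) - (k + 1))) *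
            toRF (qbinom m (k + 1)) *
              toRF (X ^ ((N - i) * (k - i)) * qbinom N i * qbinom (k + 1) (k - i)) := by
      intro i hi
      rw [ih N (by omega), Nat.add_sub_add_right]
      exact krewerasSum_summand_eq m N (Nat.lt_succ_iff.mp (mem_range.mp hi))
    rw [sum_congr rfl hterm, ← mul_sum, ← toRF_sum, ← qbinom_add_eq_sum,
      show N + (k + 1) = N + 1 + k by omega, toRF_mul]
    ring

theorem krewerasSum_div_qint (m n k : ℕ) (hk : k ≤ n) :
    krewerasSum (m + 1) (n + 1) (k + 1) / toRF (qint (m + 1)) =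
      RatFunc.X ^ ((n - k) * (m - k)) *
        (toRF (qbinom n k) * toRF (qbinom m k) / toRF (qint (k + 1))) := by
  rw [krewerasSum_succ_succ]
  rcases le_or_gt k m with hkm | hkm
  · have hexp :
        ((n : ℤ) - k) * (((m + 1 : ℕ) : ℤ) - (k + 1)) = (((n - k) * (m - k) : ℕ) : ℤ) := by
      push_cast [hk, hkm]
      ring
    have hq := congrArg toRF (qint_succ_mul_qbinom m k)
    rw [toRF_mul, toRF_mul] at hq
    have hm₀ := toRF_ne_zero (qint_ne_zero (by omega : 0 < m + 1))
    have hk₀ := toRF_ne_zero (qint_ne_zero (by omega : 0 < k + 1))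
    rw [hexp, zpow_natCast, toRF_mul]
    field_simp
    linear_combination -(RatFunc.X ^ ((n - k) * (m - k)) * toRF (qbinom n k)) * hq
  · rw [qbinom_eq_zero_of_lt hkm, qbinom_eq_zero_of_lt (by omega : m + 1 < k + 1)]
    simp [toRF_zero]

theorem stmt_19_general (n m k : ℕ) (hn : 0 < n) (hm : 0 < m)
    (hk : k ≤ n - 1) :
    ∑ P ∈ Finset.univ.filter
        (fun P : Nat.Partition n => Multiset.card P.parts = k + 1),
      (RatFunc.X : RatFunc ℚ) ^
          (((m * (n - Multiset.card P.parts) : ℕ) : ℤ) -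
            ((∑ j ∈ Finset.Icc 1 n,
                Multiset.card (P.parts.filter (fun p => j ≤ p)) *
                  Multiset.card (P.parts.filter (fun p => j + 1 ≤ p)) : ℕ) : ℤ)) *
        (toRF (qmultinom m ((List.range n).map fun j => Multiset.count (j + 1) P.parts)) /
          (∑ i ∈ Finset.range m, (RatFunc.X : RatFunc ℚ) ^ i)) =
      (RatFunc.X : RatFunc ℚ) ^ ((n - 1 - k) * (m - 1 - k)) *
        (toRF (qbinom (n - 1) k) * toRF (qbinom (m - 1) k) /
          (∑ i ∈ Finset.range (k + 1), (RatFunc.X : RatFunc ℚ) ^ i)) := by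
  obtain ⟨n, rfl⟩ := Nat.exists_eq_add_of_le' hn
  obtain ⟨m, rfl⟩ := Nat.exists_eq_add_of_le' hm
  rw [Nat.add_sub_cancel] at hk
  rw [Nat.add_sub_cancel, Nat.add_sub_cancel, ← toRF_qint, ← toRF_qint,
    ← krewerasSum_div_qint m n k hk, krewerasSum, sum_div,
    ← sum_partition_filter _ (fun s => s.card = k + 1)]
  exact sum_congr rfl fun P _ => (mul_div_assoc _ _ _).symm

/-- Type `A_{n−1}` q-Narayana formula: for `gcd(m,n) = 1` and `0 ≤ k ≤ n−1`, the sum of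
the q-Kreweras numbers `q^{m(n−ℓ(λ))−c(λ)} (1/[m]_q) [m choose μ(λ)]_q` over partitions
`λ` of `n` with `ℓ(λ) = k+1` equals
`q^{(n−1−k)(m−1−k)} (1/[k+1]_q) [n−1 choose k]_q [m−1 choose k]_q`,
as rational functions in `q`. -/
theorem stmt_19 (n m k : ℕ) (hn : 0 < n) (hm : 0 < m) (hgcd : Nat.gcd m n = 1)
    (hk : k ≤ n - 1) :
    ∑ P ∈ Finset.univ.filter
        (fun P : Nat.Partition n => Multiset.card P.parts = k + 1),
      (RatFunc.X : RatFunc ℚ) ^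
          (((m * (n - Multiset.card P.parts) : ℕ) : ℤ) -
            ((∑ j ∈ Finset.Icc 1 n,
                Multiset.card (P.parts.filter (fun p => j ≤ p)) *
                  Multiset.card (P.parts.filter (fun p => j + 1 ≤ p)) : ℕ) : ℤ)) *
        (toRF (qmultinom m ((List.range n).map fun j => Multiset.count (j + 1) P.parts)) /
          (∑ i ∈ Finset.range m, (RatFunc.X : RatFunc ℚ) ^ i)) =
      (RatFunc.X : RatFunc ℚ) ^ ((n - 1 - k) * (m - 1 - k)) *
        (toRF (qbinom (n - 1) k) * toRF (qbinom (m - 1) k) /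
          (∑ i ∈ Finset.range (k + 1), (RatFunc.X : RatFunc ℚ) ^ i)) :=
  stmt_19_general n m k hn hm hk
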